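/- Let V be an n-graded vector space over a field 𝕂 of characteristic 0. Then (M(V), [·,·]^Δ) is an (n+1)-graded Lie algebra: [M^{(k₁,κ₁)}(V), M^{(k₂,κ₂)}(V)] ⊆ M^{(k₁+k₂,κ₁+κ₂)}(V), the bracket is (n+1)-graded anticommutative, [K₁,K₂]^Δ = −(−1)^{k₁k₂+⟨κ₁,κ₂⟩}[K₂,K₁]^Δ, and it satisfies the (n+1)-graded Jacobi identity [K₁,[K₂,K₃]^Δ]^Δ = [[K₁,K₂]^Δ,K₃]^Δ + (−1)^{k₁k₂+⟨κ₁,κ₂⟩}[K₂,[K₁,K₃]^Δ]^Δ for Kᵢ ∈ M^{(kᵢ,κᵢ)}(V). -/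
import Mathlib


namespace NR

open Finset

/-- The sign `(-1)^z` for an integer `z`. -/
def sgn (z : ℤ) : ℤ := (-1) ^ z.natAbs

/-- The inner product `⟨x,y⟩ = ∑ i, xⁱ yⁱ` of multidegrees `x, y ∈ ℤⁿ`. -/
def pairZ (n : ℕ) (x y : Fin n → ℤ) : ℤ := ∑ i, x i * y i

/-- The inner product of `(n+1)`-degrees in `ℤ × ℤⁿ`. -/
def prE (n : ℕ) (g h : ℤ × (Fin n → ℤ)) : ℤ := g.1 * h.1 + pairZ n g.2 h.2

/-- Shift a sequence: `shiftSeq f i = (f i, f (i+1), …)`. -/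
def shiftSeq {β : Type*} (f : ℕ → β) (i : ℕ) : ℕ → β := fun m => f (m + i)

/-- Insert the value `c` at slot `i` of the sequence `f`, where `c` replaces
`a` consecutive entries of `f` (the entries `f i, …, f (i+a-1)`). -/
def insSeq {β : Type*} (a i : ℕ) (c : β) (f : ℕ → β) : ℕ → β :=
  fun l => if l < i then f l else if l = i then c else f (l + a - 1)

/-- Permute the first `a` entries of a sequence by `σ`. -/
def permSeq {β : Type*} (a : ℕ) (σ : Equiv.Perm (Fin a)) (f : ℕ → β) : ℕ → β :=
  fun l => if h : l < a then f ((σ ⟨l, h⟩ : Fin a) : ℕ) else f l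

/-- The multigraded sign `sign(σ, x)` of a permutation `σ` of `a` symbols with respect to
the multidegrees `x 0, …, x (a-1)`; it is the ordinary sign times the Koszul sign
collected over the inversions of `σ`. -/
def gsign {G : Type*} (pr : G → G → ℤ) (a : ℕ) (σ : Equiv.Perm (Fin a)) (x : ℕ → G) : ℤ :=
  ((Equiv.Perm.sign σ : ℤˣ) : ℤ) *
    (-1) ^ (∑ p ∈ Finset.univ.filter
        (fun p : Fin a × Fin a => p.1 < p.2 ∧ σ p.2 < σ p.1),
        pr (x ((σ p.1 : Fin a) : ℕ)) (x ((σ p.2 : Fin a) : ℕ))).natAbs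

section Ops

variable {G U : Type*} [AddCommGroup G] [AddCommGroup U]

/-- The operation `j(K₁)K₂` of the multigraded Nijenhuis–Richardson calculus.
`K₁` represents an element of `M^{(k₁,κ₁)}(U)` of arity `a₁ = k₁+1` and `K₂` one of
`M^{(k₂,κ₂)}(U)` of arity `a₂ = k₂+1`; an element of arity `a` is coded as a function
taking the sequence of multidegrees of the (homogeneous) arguments and the sequence of
arguments, and depending only on the first `a` of them. -/
def jop (pr : G → G → ℤ) (a₁ : ℕ) (κ₁ : G) (a₂ : ℕ) (κ₂ : G)
    (K₁ K₂ : (ℕ → G) → (ℕ → U) → U) : (ℕ → G) → (ℕ → U) → U :=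
  fun x X => ∑ i ∈ Finset.range a₂,
    sgn (((a₁ : ℤ) - 1) * (i : ℤ) + pr κ₁ (κ₂ + ∑ l ∈ Finset.range i, x l)) •
      K₂ (insSeq a₁ i ((∑ m ∈ Finset.range a₁, x (m + i)) + κ₁) x)
         (insSeq a₁ i (K₁ (shiftSeq x i) (shiftSeq X i)) X)

/-- The multigraded bracket `[K₁,K₂]^Δ = j(K₁)K₂ - (-1)^{k₁k₂+⟨κ₁,κ₂⟩} j(K₂)K₁`. -/
def brD (pr : G → G → ℤ) (a₁ : ℕ) (κ₁ : G) (a₂ : ℕ) (κ₂ : G)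
    (K₁ K₂ : (ℕ → G) → (ℕ → U) → U) : (ℕ → G) → (ℕ → U) → U :=
  fun x X => jop pr a₁ κ₁ a₂ κ₂ K₁ K₂ x X
    - sgn (((a₁ : ℤ) - 1) * ((a₂ : ℤ) - 1) + pr κ₁ κ₂) • jop pr a₂ κ₂ a₁ κ₁ K₂ K₁ x X

end Ops

/-- `K` represents a (`a`-linear) element of `M(U)`: it does not depend on the degree
sequence, depends only on the first `a` arguments, and is `𝕂`-multilinear in them. -/
def IsML (𝕂 : Type*) [Field 𝕂] {G U U' : Type*} [AddCommGroup U] [Module 𝕂 U]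
    [AddCommGroup U'] [Module 𝕂 U'] (a : ℕ) (K : (ℕ → G) → (ℕ → U) → U') : Prop :=
  (∀ x x' X, K x X = K x' X) ∧
  (∀ x X X', (∀ i, i < a → X i = X' i) → K x X = K x X') ∧
  (∀ x X i, i < a →
    (∀ u v : U, K x (Function.update X i (u + v))
        = K x (Function.update X i u) + K x (Function.update X i v)) ∧
    (∀ (r : 𝕂) (u : U), K x (Function.update X i (r • u)) = r • K x (Function.update X i u)))

/-- `K ∈ M^{(a-1,κ)}(U)`: an `a`-linear map mapping `U^{x₀} × ⋯ × U^{x_{a-1}}` into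
`U^{x₀+⋯+x_{a-1}+κ}`. -/
def MDeg (𝕂 : Type*) [Field 𝕂] {G U : Type*} [AddCommGroup G] [AddCommGroup U] [Module 𝕂 U]
    (gr : G → Submodule 𝕂 U) (a : ℕ) (κ : G) (K : (ℕ → G) → (ℕ → U) → U) : Prop :=
  IsML 𝕂 a K ∧
  ∀ x X, (∀ i, X i ∈ gr (x i)) → K x X ∈ gr ((∑ i ∈ Finset.range a, x i) + κ)

/-- The multigraded alternator `α` on elements of arity `a`. -/
def alt (𝕂 : Type*) [Field 𝕂] {G U U' : Type*} [AddCommGroup U'] [Module 𝕂 U']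
    (pr : G → G → ℤ) (a : ℕ) (K : (ℕ → G) → (ℕ → U) → U') : (ℕ → G) → (ℕ → U) → U' :=
  fun x X => (a.factorial : 𝕂)⁻¹ •
    ∑ σ : Equiv.Perm (Fin a),
      ((gsign pr a σ x : ℤ) : 𝕂) • K (permSeq a σ x) (permSeq a σ X)

/-- The operation `i(K₁)K₂ = ((k₁+k₂+1)!/((k₁+1)!(k₂+1)!)) α(j(K₁)K₂)`. -/
def iop (𝕂 : Type*) [Field 𝕂] {G U : Type*} [AddCommGroup G] [AddCommGroup U] [Module 𝕂 U]
    (pr : G → G → ℤ) (a₁ : ℕ) (κ₁ : G) (a₂ : ℕ) (κ₂ : G)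
    (K₁ K₂ : (ℕ → G) → (ℕ → U) → U) : (ℕ → G) → (ℕ → U) → U :=
  fun x X =>
    (((a₁ + a₂ - 1).factorial : 𝕂) / ((a₁.factorial : 𝕂) * (a₂.factorial : 𝕂))) •
      alt 𝕂 pr (a₁ + a₂ - 1) (jop pr a₁ κ₁ a₂ κ₂ K₁ K₂) x X

/-- The multigraded Nijenhuis–Richardson bracket
`[K₁,K₂]^∧ = i(K₁)K₂ - (-1)^{k₁k₂+⟨κ₁,κ₂⟩} i(K₂)K₁`. -/
def brW (𝕂 : Type*) [Field 𝕂] {G U : Type*} [AddCommGroup G] [AddCommGroup U] [Module 𝕂 U]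
    (pr : G → G → ℤ) (a₁ : ℕ) (κ₁ : G) (a₂ : ℕ) (κ₂ : G)
    (K₁ K₂ : (ℕ → G) → (ℕ → U) → U) : (ℕ → G) → (ℕ → U) → U :=
  fun x X => iop 𝕂 pr a₁ κ₁ a₂ κ₂ K₁ K₂ x X
    - sgn (((a₁ : ℤ) - 1) * ((a₂ : ℤ) - 1) + pr κ₁ κ₂) • iop 𝕂 pr a₂ κ₂ a₁ κ₁ K₂ K₁ x X

/-- `K ∈ A^{(a-1,κ)}(U) = α(M^{(a-1,κ)}(U))`, i.e. `K ∈ M^{(a-1,κ)}(U)` and `K` is fixed by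
the multigraded alternator (on homogeneous arguments). -/
def ADeg (𝕂 : Type*) [Field 𝕂] {G U : Type*} [AddCommGroup G] [AddCommGroup U] [Module 𝕂 U]
    (pr : G → G → ℤ) (gr : G → Submodule 𝕂 U) (a : ℕ) (κ : G)
    (K : (ℕ → G) → (ℕ → U) → U) : Prop :=
  MDeg 𝕂 gr a κ K ∧
  ∀ x X, (∀ i, X i ∈ gr (x i)) → alt 𝕂 pr a K x X = K x X

/-- The bilinear map `P` coded as an element of arity `2`. -/
def KofBil {𝕂 : Type*} [Field 𝕂] {G U : Type*} [AddCommGroup U] [Module 𝕂 U]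
    (P : U →ₗ[𝕂] U →ₗ[𝕂] U) : (ℕ → G) → (ℕ → U) → U :=
  fun _ X => P (X 0) (X 1)


section Aux
open Finset

lemma sgn_eq (z : ℤ) : sgn z = if Even z then 1 else -1 := by
  unfold sgn
  rcases Int.even_or_odd z with h | h
  · rw [if_pos h, Even.neg_one_pow (Int.natAbs_even.mpr h)]
  · rw [if_neg (Int.not_even_iff_odd.mpr h), Odd.neg_one_pow]
    rwa [Int.natAbs_odd]

lemma sgn_congr {a b : ℤ} (h : Even a ↔ Even b) : sgn a = sgn b := by
  rw [sgn_eq, sgn_eq, if_congr h rfl rfl]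

lemma sgn_add (a b : ℤ) : sgn (a + b) = sgn a * sgn b := by
  simp only [sgn_eq]
  by_cases h : Even a <;> by_cases h' : Even b <;> simp [Int.even_add, h, h']

lemma sgn_mul_self (a : ℤ) : sgn a * sgn a = 1 := by
  rw [sgn_eq]; split <;> norm_num

lemma sgn_eq_one_or (a : ℤ) : sgn a = 1 ∨ sgn a = -1 := by
  rw [sgn_eq]; split <;> simp

lemma sgn_sub_two_mul (a b : ℤ) : sgn (a - 2 * b) = sgn a :=
  sgn_congr (by simp [Int.even_sub, Int.even_add, Int.even_mul])

section Seq
variable {β : Type*} [AddCommGroup β]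

lemma shiftSeq_apply {γ : Type*} (f : ℕ → γ) (i m : ℕ) : shiftSeq f i m = f (m + i) := rfl

lemma shiftSeq_shiftSeq {γ : Type*} (f : ℕ → γ) (i j : ℕ) :
    shiftSeq (shiftSeq f i) j = shiftSeq f (j + i) := by
  funext m; simp only [shiftSeq]; congr 1; omega

lemma insSeq_update {γ : Type*} (a i : ℕ) (c d : γ) (f : ℕ → γ) :
    Function.update (insSeq a i d f) i c = insSeq a i c f := by
  funext l
  rcases eq_or_ne l i with rfl | h
  · simp [insSeq, Function.update]
  · simp [Function.update, h, insSeq]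

/-- Sum of a prefix of `insSeq` that lies entirely before the insertion point. -/
lemma sum_insSeq_of_le (a i : ℕ) (c : β) (x : ℕ → β) {j : ℕ} (h : j ≤ i) :
    ∑ l ∈ range j, insSeq a i c x l = ∑ l ∈ range j, x l := by
  refine Finset.sum_congr rfl fun l hl => ?_
  rw [mem_range] at hl
  simp [insSeq, show l < i by omega]

/-- Sum of a prefix of `insSeq` strictly past the insertion point. -/
lemma sum_insSeq_of_lt (a i : ℕ) (c : β) (x : ℕ → β) {j : ℕ} (h : i < j) :
    ∑ l ∈ range j, insSeq a i c x l
      = (∑ l ∈ range (j + a - 1), x l) + c - ∑ m ∈ range a, x (m + i) := by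
  obtain ⟨k, rfl⟩ : ∃ k, j = i + 1 + k := ⟨j - i - 1, by omega⟩
  induction k with
  | zero =>
      rw [Finset.sum_range_succ, sum_insSeq_of_le a i c x (le_refl i)]
      have h1 : insSeq a i c x i = c := by simp [insSeq]
      have h2 : i + 1 + 0 + a - 1 = i + a := by omega
      rw [h1, h2, Finset.sum_range_add]
      have h3 : ∑ l ∈ range a, x (i + l) = ∑ m ∈ range a, x (m + i) :=
        Finset.sum_congr rfl fun l _ => by rw [Nat.add_comm]
      rw [h3]; abel
  | succ k ih =>
      have hik : i < i + 1 + k := by omega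
      rw [show i + 1 + (k+1) = (i + 1 + k) + 1 by omega, Finset.sum_range_succ, ih hik]
      have h4 : insSeq a i c x (i + 1 + k) = x (i + 1 + k + a - 1) := by
        simp [insSeq, show ¬ (i+1+k < i) by omega, show ¬ (i+1+k = i) by omega]
      have h5 : (i + 1 + k + 1) + a - 1 = (i + 1 + k + a - 1) + 1 := by omega
      rw [h4, h5, Finset.sum_range_succ]
      abel

end Seq

section ML
variable {𝕂 : Type} [Field 𝕂] {G : Type} {V : Type} [AddCommGroup V] [Module 𝕂 V]
variable {a : ℕ} {K : (ℕ → G) → (ℕ → V) → V}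

lemma IsML.congr (hK : IsML 𝕂 a K) (x x' : ℕ → G) {X X' : ℕ → V}
    (h : ∀ i, i < a → X i = X' i) : K x X = K x' X' :=
  (hK.1 x x' X).trans (hK.2.1 x' X X' h)

/-- The slot homomorphism. -/
private def slotHom (hK : IsML 𝕂 a K) (x : ℕ → G) (X : ℕ → V) {i : ℕ} (hi : i < a) :
    V →+ V :=
  AddMonoidHom.mk' (fun u => K x (Function.update X i u)) (hK.2.2 x X i hi).1

lemma IsML.ins_eq (hK : IsML 𝕂 a K) (x : ℕ → G) (X : ℕ → V) {i : ℕ} (hi : i < a)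
    (m : ℕ) (c : V) :
    K x (insSeq m i c X) = slotHom hK x (insSeq m i (0:V) X) hi c := by
  show _ = K x (Function.update (insSeq m i (0:V) X) i c)
  rw [insSeq_update]

lemma IsML.ins_zero (hK : IsML 𝕂 a K) (x : ℕ → G) (X : ℕ → V) {i : ℕ} (hi : i < a)
    (m : ℕ) : K x (insSeq m i (0:V) X) = 0 := by
  rw [hK.ins_eq x X hi m 0, map_zero]

lemma IsML.ins_sum (hK : IsML 𝕂 a K) (x : ℕ → G) (X : ℕ → V) {i : ℕ} (hi : i < a)
    (m : ℕ) {ι : Type*} (s : Finset ι) (g : ι → V) :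
    K x (insSeq m i (∑ t ∈ s, g t) X) = ∑ t ∈ s, K x (insSeq m i (g t) X) := by
  rw [hK.ins_eq x X hi m, map_sum]
  exact Finset.sum_congr rfl fun t _ => (hK.ins_eq x X hi m (g t)).symm

lemma IsML.ins_zsmul (hK : IsML 𝕂 a K) (x : ℕ → G) (X : ℕ → V) {i : ℕ} (hi : i < a)
    (m : ℕ) (z : ℤ) (u : V) :
    K x (insSeq m i (z • u) X) = z • K x (insSeq m i u X) := by
  rw [hK.ins_eq x X hi m, map_zsmul, hK.ins_eq x X hi m]

lemma IsML.ins_sub (hK : IsML 𝕂 a K) (x : ℕ → G) (X : ℕ → V) {i : ℕ} (hi : i < a)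
    (m : ℕ) (u v : V) :
    K x (insSeq m i (u - v) X) = K x (insSeq m i u X) - K x (insSeq m i v X) := by
  rw [hK.ins_eq x X hi m, map_sub, hK.ins_eq x X hi m, hK.ins_eq x X hi m]

end ML
end Aux
section JopAux
open Finset
variable {𝕂 : Type} [Field 𝕂] {G : Type} [AddCommGroup G] {V : Type} [AddCommGroup V]
  [Module 𝕂 V]
variable (pr : G → G → ℤ)

lemma jop_right_sub (a₁ : ℕ) (κ₁ : G) (a₂ : ℕ) (κ₂ : G)
    (K F F' : (ℕ → G) → (ℕ → V) → V) (c : ℤ) (x : ℕ → G) (X : ℕ → V) :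
    jop pr a₁ κ₁ a₂ κ₂ K (fun y Y => F y Y - c • F' y Y) x X
      = jop pr a₁ κ₁ a₂ κ₂ K F x X - c • jop pr a₁ κ₁ a₂ κ₂ K F' x X := by
  simp only [jop, Finset.smul_sum, ← Finset.sum_sub_distrib]
  refine Finset.sum_congr rfl fun i _ => ?_
  rw [smul_sub, smul_comm]

lemma jop_right_zero (a₁ : ℕ) (κ₁ : G) (a₂ : ℕ) (κ₂ : G)
    (K F : (ℕ → G) → (ℕ → V) → V) (hF : ∀ y Y, F y Y = 0) (x : ℕ → G) (X : ℕ → V) :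
    jop pr a₁ κ₁ a₂ κ₂ K F x X = 0 := by
  simp only [jop, hF, smul_zero, Finset.sum_const_zero]

lemma jop_left_sub (a₁ : ℕ) (κ₁ : G) (a₂ : ℕ) (κ₂ : G)
    (F F' K : (ℕ → G) → (ℕ → V) → V) (hK : IsML 𝕂 a₂ K) (c : ℤ) (x : ℕ → G) (X : ℕ → V) :
    jop pr a₁ κ₁ a₂ κ₂ (fun y Y => F y Y - c • F' y Y) K x X
      = jop pr a₁ κ₁ a₂ κ₂ F K x X - c • jop pr a₁ κ₁ a₂ κ₂ F' K x X := by
  simp only [jop, Finset.smul_sum, ← Finset.sum_sub_distrib]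
  refine Finset.sum_congr rfl fun i hi => ?_
  rw [mem_range] at hi
  rw [hK.ins_sub _ X hi, hK.ins_zsmul _ X hi, smul_sub, smul_comm]

lemma jop_left_zero (a₁ : ℕ) (κ₁ : G) (a₂ : ℕ) (κ₂ : G)
    (F K : (ℕ → G) → (ℕ → V) → V) (hK : IsML 𝕂 a₂ K) (hF : ∀ y Y, F y Y = 0)
    (x : ℕ → G) (X : ℕ → V) :
    jop pr a₁ κ₁ a₂ κ₂ F K x X = 0 := by
  simp only [jop, hF]
  rw [Finset.sum_eq_zero]
  intro i hi
  rw [mem_range] at hi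
  rw [hK.ins_zero _ _ hi, smul_zero]

/-- A single term in the full expansion of `jop K₁ (jop K₂ K₃)`. -/
def Tterm (a₁ : ℕ) (κ₁ : G) (a₂ : ℕ) (κ₂ : G) (κ₃ : G)
    (K₁ K₂ K₃ : (ℕ → G) → (ℕ → V) → V) (x : ℕ → G) (X : ℕ → V) (i j : ℕ) : V :=
  sgn (((a₁ : ℤ) - 1) * (i : ℤ) + pr κ₁ ((κ₂ + κ₃) + ∑ l ∈ Finset.range i, x l)) •
    (sgn (((a₂ : ℤ) - 1) * (j : ℤ) + pr κ₂ (κ₃ + ∑ l ∈ Finset.range j,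
        insSeq a₁ i ((∑ m ∈ Finset.range a₁, x (m + i)) + κ₁) x l)) •
      K₃ (insSeq a₂ j ((∑ m ∈ Finset.range a₂,
            insSeq a₁ i ((∑ m ∈ Finset.range a₁, x (m + i)) + κ₁) x (m + j)) + κ₂)
            (insSeq a₁ i ((∑ m ∈ Finset.range a₁, x (m + i)) + κ₁) x))
         (insSeq a₂ j
            (K₂ (shiftSeq (insSeq a₁ i ((∑ m ∈ Finset.range a₁, x (m + i)) + κ₁) x) j)
                (shiftSeq (insSeq a₁ i (K₁ (shiftSeq x i) (shiftSeq X i)) X) j))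
            (insSeq a₁ i (K₁ (shiftSeq x i) (shiftSeq X i)) X)))

lemma jop_jop_expand (a₁ : ℕ) (κ₁ : G) (a₂ : ℕ) (κ₂ : G) (a₃ : ℕ) (κ₃ : G)
    (K₁ K₂ K₃ : (ℕ → G) → (ℕ → V) → V) (x : ℕ → G) (X : ℕ → V) :
    jop pr a₁ κ₁ (a₂ + a₃ - 1) (κ₂ + κ₃) K₁ (jop pr a₂ κ₂ a₃ κ₃ K₂ K₃) x X
      = ∑ p ∈ Finset.range (a₂ + a₃ - 1) ×ˢ Finset.range a₃,
          Tterm pr a₁ κ₁ a₂ κ₂ κ₃ K₁ K₂ K₃ x X p.1 p.2 := by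
  rw [Finset.sum_product]
  show ∑ i ∈ Finset.range (a₂ + a₃ - 1), _ = _
  refine Finset.sum_congr rfl fun i _ => ?_
  show sgn _ • jop pr a₂ κ₂ a₃ κ₃ K₂ K₃ _ _ = _
  rw [jop, Finset.smul_sum]
  rfl

end JopAux
section SwapAux
open Finset
variable {𝕂 : Type} [Field 𝕂] {G : Type} [AddCommGroup G] {V : Type} [AddCommGroup V]
  [Module 𝕂 V]
variable (pr : G → G → ℤ)

lemma insSeq_lt' {γ : Type*} (a i : ℕ) (c : γ) (f : ℕ → γ) {l : ℕ} (h : l < i) :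
    insSeq a i c f l = f l := by simp [insSeq, h]

lemma insSeq_eq' {γ : Type*} (a i : ℕ) (c : γ) (f : ℕ → γ) :
    insSeq a i c f i = c := by simp [insSeq]

lemma insSeq_gt' {γ : Type*} (a i : ℕ) (c : γ) (f : ℕ → γ) {l : ℕ} (h : i < l) :
    insSeq a i c f l = f (l + a - 1) := by
  simp [insSeq, Nat.lt_asymm h, Nat.ne_of_gt h]

lemma sgn_shift (a b c : ℤ) (h : a = b - 2 * c) : sgn a = sgn b := h ▸ sgn_sub_two_mul b c

lemma Tterm_swap (hadd : ∀ g h k : G, pr g (h + k) = pr g h + pr g k)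
    (hsym : ∀ g h : G, pr g h = pr h g)
    {a₁ a₂ a₃ : ℕ} {κ₁ κ₂ κ₃ : G} {K₁ K₂ K₃ : (ℕ → G) → (ℕ → V) → V}
    (h₁ : IsML 𝕂 a₁ K₁) (h₂ : IsML 𝕂 a₂ K₂) (h₃ : IsML 𝕂 a₃ K₃)
    (x : ℕ → G) (X : ℕ → V) {i j : ℕ} (hij : j + a₂ ≤ i) :
    Tterm pr a₁ κ₁ a₂ κ₂ κ₃ K₁ K₂ K₃ x X i j
      = sgn (((a₁ : ℤ) - 1) * ((a₂ : ℤ) - 1) + pr κ₁ κ₂) •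
          Tterm pr a₂ κ₂ a₁ κ₁ κ₃ K₂ K₁ K₃ x X j (i - a₂ + 1) := by
  have hji : j < i - a₂ + 1 := by omega
  -- value equality
  have hw : K₂ (shiftSeq (insSeq a₁ i ((∑ m ∈ Finset.range a₁, x (m + i)) + κ₁) x) j)
        (shiftSeq (insSeq a₁ i (K₁ (shiftSeq x i) (shiftSeq X i)) X) j)
      = K₂ (shiftSeq x j) (shiftSeq X j) := by
    refine h₂.congr _ _ fun m hm => ?_
    simp only [shiftSeq]
    exact insSeq_lt' _ _ _ _ (by omega)
  have hu : K₁ (shiftSeq (insSeq a₂ j ((∑ m ∈ Finset.range a₂, x (m + j)) + κ₂) x) (i - a₂ + 1))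
        (shiftSeq (insSeq a₂ j (K₂ (shiftSeq x j) (shiftSeq X j)) X) (i - a₂ + 1))
      = K₁ (shiftSeq x i) (shiftSeq X i) := by
    refine h₁.congr _ _ fun m hm => ?_
    simp only [shiftSeq]
    rw [insSeq_gt' _ _ _ _ (by omega : j < m + (i - a₂ + 1))]
    congr 1; omega
  have hargs : ∀ l,
      insSeq a₂ j
        (K₂ (shiftSeq (insSeq a₁ i ((∑ m ∈ Finset.range a₁, x (m + i)) + κ₁) x) j)
            (shiftSeq (insSeq a₁ i (K₁ (shiftSeq x i) (shiftSeq X i)) X) j))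
        (insSeq a₁ i (K₁ (shiftSeq x i) (shiftSeq X i)) X) l
      = insSeq a₁ (i - a₂ + 1)
          (K₁ (shiftSeq (insSeq a₂ j ((∑ m ∈ Finset.range a₂, x (m + j)) + κ₂) x) (i - a₂ + 1))
              (shiftSeq (insSeq a₂ j (K₂ (shiftSeq x j) (shiftSeq X j)) X) (i - a₂ + 1)))
          (insSeq a₂ j (K₂ (shiftSeq x j) (shiftSeq X j)) X) l := by
    intro l
    rcases lt_trichotomy l j with hl | rfl | hl
    · rw [insSeq_lt' _ _ _ _ hl, insSeq_lt' _ _ _ _ (show l < i by omega),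
        insSeq_lt' _ _ _ _ (show l < i - a₂ + 1 by omega), insSeq_lt' _ _ _ _ hl]
    · rw [insSeq_eq', insSeq_lt' _ _ _ _ hji, insSeq_eq']
      exact hw
    · rcases lt_trichotomy l (i - a₂ + 1) with hl2 | heq | hl2
      · rw [insSeq_gt' _ _ _ _ hl, insSeq_lt' _ _ _ _ (show l + a₂ - 1 < i by omega),
          insSeq_lt' _ _ _ _ hl2, insSeq_gt' _ _ _ _ hl]
      · rw [insSeq_gt' _ _ _ _ hl, show l + a₂ - 1 = i by omega, insSeq_eq', heq,
          insSeq_eq']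
        exact hu.symm
      · rw [insSeq_gt' _ _ _ _ hl, insSeq_gt' _ _ _ _ (show i < l + a₂ - 1 by omega),
          insSeq_gt' _ _ _ _ hl2, insSeq_gt' _ _ _ _ (show j < l + a₁ - 1 by omega)]
        congr 1; omega
  have hv : K₃ (insSeq a₂ j ((∑ m ∈ Finset.range a₂,
          insSeq a₁ i ((∑ m ∈ Finset.range a₁, x (m + i)) + κ₁) x (m + j)) + κ₂)
          (insSeq a₁ i ((∑ m ∈ Finset.range a₁, x (m + i)) + κ₁) x))
        (insSeq a₂ j
          (K₂ (shiftSeq (insSeq a₁ i ((∑ m ∈ Finset.range a₁, x (m + i)) + κ₁) x) j)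
              (shiftSeq (insSeq a₁ i (K₁ (shiftSeq x i) (shiftSeq X i)) X) j))
          (insSeq a₁ i (K₁ (shiftSeq x i) (shiftSeq X i)) X))
      = K₃ (insSeq a₁ (i - a₂ + 1) ((∑ m ∈ Finset.range a₁,
          insSeq a₂ j ((∑ m ∈ Finset.range a₂, x (m + j)) + κ₂) x (m + (i - a₂ + 1))) + κ₁)
          (insSeq a₂ j ((∑ m ∈ Finset.range a₂, x (m + j)) + κ₂) x))
        (insSeq a₁ (i - a₂ + 1)
          (K₁ (shiftSeq (insSeq a₂ j ((∑ m ∈ Finset.range a₂, x (m + j)) + κ₂) x) (i - a₂ + 1))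
              (shiftSeq (insSeq a₂ j (K₂ (shiftSeq x j) (shiftSeq X j)) X) (i - a₂ + 1)))
          (insSeq a₂ j (K₂ (shiftSeq x j) (shiftSeq X j)) X)) :=
    h₃.congr _ _ fun l _ => hargs l
  simp only [Tterm]
  rw [sum_insSeq_of_le a₁ i _ x (show j ≤ i by omega)]
  rw [sum_insSeq_of_lt a₂ j _ x hji]
  rw [show (i - a₂ + 1) + a₂ - 1 = i by omega]
  rw [show (∑ l ∈ Finset.range i, x l) + ((∑ m ∈ Finset.range a₂, x (m + j)) + κ₂)
      - ∑ m ∈ Finset.range a₂, x (m + j) = κ₂ + ∑ l ∈ Finset.range i, x l by abel]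
  rw [hv]
  rw [smul_smul, smul_smul, smul_smul]
  congr 1
  rw [← sgn_add, ← sgn_add, ← sgn_add]
  refine sgn_shift _ _ (pr κ₁ κ₂) ?_
  rw [show ((i - a₂ + 1 : ℕ) : ℤ) = (i : ℤ) - (a₂ : ℤ) + 1 by omega]
  simp only [hadd]
  rw [hsym κ₂ κ₁]
  ring
end SwapAux
section NestedAux
open Finset
variable {𝕂 : Type} [Field 𝕂] {G : Type} [AddCommGroup G] {V : Type} [AddCommGroup V]
  [Module 𝕂 V]
variable (pr : G → G → ℤ)

lemma Tterm_nested (hadd : ∀ g h k : G, pr g (h + k) = pr g h + pr g k)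
    (hsym : ∀ g h : G, pr g h = pr h g)
    {a₁ a₂ a₃ : ℕ} {κ₁ κ₂ κ₃ : G} {K₁ K₂ K₃ : (ℕ → G) → (ℕ → V) → V}
    (h₁ : IsML 𝕂 a₁ K₁) (h₂ : IsML 𝕂 a₂ K₂) (h₃ : IsML 𝕂 a₃ K₃)
    (x : ℕ → G) (X : ℕ → V) {j t : ℕ} (ht : t < a₂) :
    Tterm pr a₁ κ₁ a₂ κ₂ κ₃ K₁ K₂ K₃ x X (j + t) j
      = sgn ((((a₁ + a₂ - 1 : ℕ) : ℤ) - 1) * (j : ℤ) + pr (κ₁ + κ₂) (κ₃ + ∑ l ∈ range j, x l)) •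
        (sgn (((a₁ : ℤ) - 1) * (t : ℤ) + pr κ₁ (κ₂ + ∑ l ∈ range t, shiftSeq x j l)) •
          K₃ (insSeq (a₁ + a₂ - 1) j ((∑ m ∈ range (a₁ + a₂ - 1), x (m + j)) + (κ₁ + κ₂)) x)
            (insSeq (a₁ + a₂ - 1) j
              (K₂ (insSeq a₁ t ((∑ m ∈ range a₁, shiftSeq x j (m + t)) + κ₁) (shiftSeq x j))
                  (insSeq a₁ t
                    (K₁ (shiftSeq (shiftSeq x j) t) (shiftSeq (shiftSeq X j) t))
                    (shiftSeq X j)))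
              X)) := by
  have haddl : ∀ g h k : G, pr (g + h) k = pr g k + pr h k := fun g h k => by
    rw [hsym, hadd, hsym k g, hsym k h]
  have hu : K₁ (shiftSeq x (j + t)) (shiftSeq X (j + t))
      = K₁ (shiftSeq (shiftSeq x j) t) (shiftSeq (shiftSeq X j) t) := by
    refine h₁.congr _ _ fun m _ => ?_
    simp only [shiftSeq]; congr 1; omega
  have hw : K₂ (shiftSeq (insSeq a₁ (j + t) ((∑ m ∈ range a₁, x (m + (j + t))) + κ₁) x) j)
        (shiftSeq (insSeq a₁ (j + t) (K₁ (shiftSeq x (j + t)) (shiftSeq X (j + t))) X) j)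
      = K₂ (insSeq a₁ t ((∑ m ∈ range a₁, shiftSeq x j (m + t)) + κ₁) (shiftSeq x j))
          (insSeq a₁ t (K₁ (shiftSeq (shiftSeq x j) t) (shiftSeq (shiftSeq X j) t))
            (shiftSeq X j)) := by
    refine h₂.congr _ _ fun m _ => ?_
    simp only [shiftSeq]
    rcases lt_trichotomy m t with hm | rfl | hm
    · rw [insSeq_lt' _ _ _ _ (show m + j < j + t by omega),
        insSeq_lt' _ _ _ _ hm]
      rfl
    · rw [show m + j = j + m from by omega, insSeq_eq', insSeq_eq']
      exact hu
    · rw [insSeq_gt' _ _ _ _ (show j + t < m + j by omega),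
        insSeq_gt' _ _ _ _ hm]
      simp only [shiftSeq]; congr 1; omega
  have hargs : ∀ l,
      insSeq a₂ j
        (K₂ (shiftSeq (insSeq a₁ (j + t) ((∑ m ∈ range a₁, x (m + (j + t))) + κ₁) x) j)
            (shiftSeq (insSeq a₁ (j + t) (K₁ (shiftSeq x (j + t)) (shiftSeq X (j + t))) X) j))
        (insSeq a₁ (j + t) (K₁ (shiftSeq x (j + t)) (shiftSeq X (j + t))) X) l
      = insSeq (a₁ + a₂ - 1) j
          (K₂ (insSeq a₁ t ((∑ m ∈ range a₁, shiftSeq x j (m + t)) + κ₁) (shiftSeq x j))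
              (insSeq a₁ t (K₁ (shiftSeq (shiftSeq x j) t) (shiftSeq (shiftSeq X j) t))
                (shiftSeq X j)))
          X l := by
    intro l
    rcases lt_trichotomy l j with hl | rfl | hl
    · rw [insSeq_lt' _ _ _ _ hl, insSeq_lt' _ _ _ _ (show l < j + t by omega),
        insSeq_lt' _ _ _ _ hl]
    · rw [insSeq_eq', insSeq_eq']
      exact hw
    · rw [insSeq_gt' _ _ _ _ hl, insSeq_gt' _ _ _ _ (show j + t < l + a₂ - 1 by omega),
        insSeq_gt' _ _ _ _ hl]
      congr 1; omega
  have hv : K₃ (insSeq a₂ j ((∑ m ∈ range a₂,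
          insSeq a₁ (j + t) ((∑ m ∈ range a₁, x (m + (j + t))) + κ₁) x (m + j)) + κ₂)
          (insSeq a₁ (j + t) ((∑ m ∈ range a₁, x (m + (j + t))) + κ₁) x))
        (insSeq a₂ j
          (K₂ (shiftSeq (insSeq a₁ (j + t) ((∑ m ∈ range a₁, x (m + (j + t))) + κ₁) x) j)
              (shiftSeq (insSeq a₁ (j + t) (K₁ (shiftSeq x (j + t)) (shiftSeq X (j + t))) X) j))
          (insSeq a₁ (j + t) (K₁ (shiftSeq x (j + t)) (shiftSeq X (j + t))) X))
      = K₃ (insSeq (a₁ + a₂ - 1) j ((∑ m ∈ range (a₁ + a₂ - 1), x (m + j)) + (κ₁ + κ₂)) x)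
          (insSeq (a₁ + a₂ - 1) j
            (K₂ (insSeq a₁ t ((∑ m ∈ range a₁, shiftSeq x j (m + t)) + κ₁) (shiftSeq x j))
                (insSeq a₁ t (K₁ (shiftSeq (shiftSeq x j) t) (shiftSeq (shiftSeq X j) t))
                  (shiftSeq X j)))
            X) :=
    h₃.congr _ _ fun l _ => hargs l
  simp only [Tterm]
  rw [sum_insSeq_of_le a₁ (j + t) _ x (show j ≤ j + t by omega)]
  rw [hv]
  rw [smul_smul, smul_smul]
  congr 1
  rw [← sgn_add, ← sgn_add]
  congr 1
  have hsplit : ∑ l ∈ range (j + t), x l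
      = (∑ l ∈ range j, x l) + ∑ l ∈ range t, shiftSeq x j l := by
    rw [Finset.sum_range_add]
    congr 1
    exact Finset.sum_congr rfl fun l _ => by simp only [shiftSeq]; congr 1; omega
  rw [hsplit]
  rw [show ((a₁ + a₂ - 1 : ℕ) : ℤ) = (a₁ : ℤ) + (a₂ : ℤ) - 1 by omega]
  push_cast
  simp only [hadd, haddl]
  ring
end NestedAux
section SumAux
open Finset
variable {𝕂 : Type} [Field 𝕂] {G : Type} [AddCommGroup G] {V : Type} [AddCommGroup V]
  [Module 𝕂 V]
variable (pr : G → G → ℤ)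

lemma sum_nested_eq (hadd : ∀ g h k : G, pr g (h + k) = pr g h + pr g k)
    (hsym : ∀ g h : G, pr g h = pr h g)
    {a₁ a₂ a₃ : ℕ} {κ₁ κ₂ κ₃ : G} {K₁ K₂ K₃ : (ℕ → G) → (ℕ → V) → V}
    (h₁ : IsML 𝕂 a₁ K₁) (h₂ : IsML 𝕂 a₂ K₂) (h₃ : IsML 𝕂 a₃ K₃)
    (x : ℕ → G) (X : ℕ → V) :
    ∑ p ∈ (range (a₂ + a₃ - 1) ×ˢ range a₃).filter
        (fun p : ℕ × ℕ => ¬ p.1 < p.2 ∧ p.1 < p.2 + a₂),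
      Tterm pr a₁ κ₁ a₂ κ₂ κ₃ K₁ K₂ K₃ x X p.1 p.2
    = jop pr (a₁ + a₂ - 1) (κ₁ + κ₂) a₃ κ₃ (jop pr a₁ κ₁ a₂ κ₂ K₁ K₂) K₃ x X := by
  have hR : jop pr (a₁ + a₂ - 1) (κ₁ + κ₂) a₃ κ₃ (jop pr a₁ κ₁ a₂ κ₂ K₁ K₂) K₃ x X
      = ∑ q ∈ range a₃ ×ˢ range a₂,
          Tterm pr a₁ κ₁ a₂ κ₂ κ₃ K₁ K₂ K₃ x X (q.1 + q.2) q.1 := by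
    rw [Finset.sum_product]
    rw [jop]
    refine Finset.sum_congr rfl fun j hj => ?_
    rw [mem_range] at hj
    show _ • K₃ _ (insSeq _ j (jop pr a₁ κ₁ a₂ κ₂ K₁ K₂ (shiftSeq x j) (shiftSeq X j)) X) = _
    rw [jop]
    rw [h₃.ins_sum _ X hj]
    rw [Finset.smul_sum]
    refine Finset.sum_congr rfl fun t ht => ?_
    rw [mem_range] at ht
    rw [h₃.ins_zsmul _ X hj]
    exact (Tterm_nested pr hadd hsym h₁ h₂ h₃ x X ht).symm
  rw [hR]
  refine Finset.sum_nbij' (fun p => (p.2, p.1 - p.2)) (fun q => (q.1 + q.2, q.1))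
    ?_ ?_ ?_ ?_ ?_
  · intro p hp
    simp only [mem_filter, mem_product, mem_range] at hp ⊢
    omega
  · intro q hq
    simp only [mem_filter, mem_product, mem_range] at hq ⊢
    omega
  · intro p hp
    obtain ⟨i, j⟩ := p
    simp only [mem_filter, mem_product, mem_range] at hp
    dsimp only
    simp only [Prod.mk.injEq, and_true, true_and]
    omega
  · intro q hq
    obtain ⟨j, t⟩ := q
    simp only [mem_filter, mem_product, mem_range] at hq
    dsimp only
    simp only [Prod.mk.injEq, and_true, true_and]
    omega
  · intro p hp
    obtain ⟨i, j⟩ := p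
    simp only [mem_filter, mem_product, mem_range] at hp
    dsimp only
    rw [show j + (i - j) = i by omega]

lemma sum_regionB_eq (hadd : ∀ g h k : G, pr g (h + k) = pr g h + pr g k)
    (hsym : ∀ g h : G, pr g h = pr h g)
    {a₁ a₂ a₃ : ℕ} {κ₁ κ₂ κ₃ : G} {K₁ K₂ K₃ : (ℕ → G) → (ℕ → V) → V}
    (h₁ : IsML 𝕂 a₁ K₁) (h₂ : IsML 𝕂 a₂ K₂) (h₃ : IsML 𝕂 a₃ K₃)
    (x : ℕ → G) (X : ℕ → V) :
    ∑ p ∈ (range (a₂ + a₃ - 1) ×ˢ range a₃).filter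
        (fun p : ℕ × ℕ => ¬ p.1 < p.2 ∧ ¬ p.1 < p.2 + a₂),
      Tterm pr a₁ κ₁ a₂ κ₂ κ₃ K₁ K₂ K₃ x X p.1 p.2
    = sgn (((a₁ : ℤ) - 1) * ((a₂ : ℤ) - 1) + pr κ₁ κ₂) •
        ∑ p ∈ (range (a₁ + a₃ - 1) ×ˢ range a₃).filter (fun p : ℕ × ℕ => p.1 < p.2),
          Tterm pr a₂ κ₂ a₁ κ₁ κ₃ K₂ K₁ K₃ x X p.1 p.2 := by
  rw [Finset.smul_sum]
  refine Finset.sum_nbij' (fun p => (p.2, p.1 - a₂ + 1)) (fun q => (q.2 + a₂ - 1, q.1))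
    ?_ ?_ ?_ ?_ ?_
  · intro p hp
    simp only [mem_filter, mem_product, mem_range] at hp ⊢
    omega
  · intro q hq
    simp only [mem_filter, mem_product, mem_range] at hq ⊢
    omega
  · intro p hp
    obtain ⟨i, j⟩ := p
    simp only [mem_filter, mem_product, mem_range] at hp
    dsimp only
    simp only [Prod.mk.injEq, and_true, true_and]
    omega
  · intro q hq
    obtain ⟨i, j⟩ := q
    simp only [mem_filter, mem_product, mem_range] at hq
    dsimp only
    simp only [Prod.mk.injEq, and_true, true_and]
    omega
  · intro p hp
    obtain ⟨i, j⟩ := p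
    simp only [mem_filter, mem_product, mem_range] at hp
    exact Tterm_swap pr hadd hsym h₁ h₂ h₃ x X (by omega)

lemma preLie (hadd : ∀ g h k : G, pr g (h + k) = pr g h + pr g k)
    (hsym : ∀ g h : G, pr g h = pr h g)
    {a₁ a₂ a₃ : ℕ} {κ₁ κ₂ κ₃ : G} {K₁ K₂ K₃ : (ℕ → G) → (ℕ → V) → V}
    (h₁ : IsML 𝕂 a₁ K₁) (h₂ : IsML 𝕂 a₂ K₂) (h₃ : IsML 𝕂 a₃ K₃)
    (x : ℕ → G) (X : ℕ → V) :
    jop pr a₁ κ₁ (a₂ + a₃ - 1) (κ₂ + κ₃) K₁ (jop pr a₂ κ₂ a₃ κ₃ K₂ K₃) x X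
      - jop pr (a₁ + a₂ - 1) (κ₁ + κ₂) a₃ κ₃ (jop pr a₁ κ₁ a₂ κ₂ K₁ K₂) K₃ x X
    = sgn (((a₁ : ℤ) - 1) * ((a₂ : ℤ) - 1) + pr κ₁ κ₂) •
      (jop pr a₂ κ₂ (a₁ + a₃ - 1) (κ₁ + κ₃) K₂ (jop pr a₁ κ₁ a₃ κ₃ K₁ K₃) x X
        - jop pr (a₂ + a₁ - 1) (κ₂ + κ₁) a₃ κ₃ (jop pr a₂ κ₂ a₁ κ₁ K₂ K₁) K₃ x X) := by
  classical
  have hpart : ∀ (b c N : ℕ) (f : ℕ × ℕ → V),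
      ∑ p ∈ range b ×ˢ range c, f p
        = (∑ p ∈ (range b ×ˢ range c).filter (fun p : ℕ × ℕ => p.1 < p.2), f p
          + ∑ p ∈ (range b ×ˢ range c).filter
              (fun p : ℕ × ℕ => ¬ p.1 < p.2 ∧ p.1 < p.2 + N), f p)
          + ∑ p ∈ (range b ×ˢ range c).filter
              (fun p : ℕ × ℕ => ¬ p.1 < p.2 ∧ ¬ p.1 < p.2 + N), f p := by
    intro b c N f
    rw [← Finset.sum_filter_add_sum_filter_not (range b ×ˢ range c)
      (fun p : ℕ × ℕ => p.1 < p.2) f]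
    rw [← Finset.sum_filter_add_sum_filter_not
      ((range b ×ˢ range c).filter (fun p : ℕ × ℕ => ¬ p.1 < p.2))
      (fun p : ℕ × ℕ => p.1 < p.2 + N) f]
    rw [Finset.filter_filter, Finset.filter_filter, add_assoc]
  rw [jop_jop_expand, jop_jop_expand]
  rw [hpart (a₂ + a₃ - 1) a₃ a₂, hpart (a₁ + a₃ - 1) a₃ a₁]
  rw [sum_nested_eq pr hadd hsym h₁ h₂ h₃ x X, sum_nested_eq pr hadd hsym h₂ h₁ h₃ x X]
  rw [sum_regionB_eq pr hadd hsym h₁ h₂ h₃ x X, sum_regionB_eq pr hadd hsym h₂ h₁ h₃ x X]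
  have hσ : sgn (((a₂ : ℤ) - 1) * ((a₁ : ℤ) - 1) + pr κ₂ κ₁)
      = sgn (((a₁ : ℤ) - 1) * ((a₂ : ℤ) - 1) + pr κ₁ κ₂) := by
    rw [hsym κ₂ κ₁]; ring_nf
  rw [hσ]
  rw [smul_sub, smul_add, smul_add, smul_smul, sgn_mul_self, one_smul]
  abel
end SumAux
section MemAux
open Finset
variable {𝕂 : Type} [Field 𝕂] {G : Type} [AddCommGroup G] {V : Type} [AddCommGroup V]
  [Module 𝕂 V]
variable (pr : G → G → ℤ)

lemma jop_mem {gr : G → Submodule 𝕂 V} {a₁ a₂ : ℕ} {κ₁ κ₂ : G}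
    {K₁ K₂ : (ℕ → G) → (ℕ → V) → V}
    (h₁ : MDeg 𝕂 gr a₁ κ₁ K₁) (h₂ : MDeg 𝕂 gr a₂ κ₂ K₂)
    (x : ℕ → G) (X : ℕ → V) (hX : ∀ i, X i ∈ gr (x i)) :
    jop pr a₁ κ₁ a₂ κ₂ K₁ K₂ x X
      ∈ gr ((∑ i ∈ Finset.range (a₁ + a₂ - 1), x i) + (κ₁ + κ₂)) := by
  rw [jop]
  refine Submodule.sum_mem _ fun i hi => ?_
  rw [mem_range] at hi
  refine zsmul_mem ?_ _
  have hdeg : (∑ l ∈ range a₂, insSeq a₁ i ((∑ m ∈ range a₁, x (m + i)) + κ₁) x l) + κ₂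
      = (∑ l ∈ Finset.range (a₁ + a₂ - 1), x l) + (κ₁ + κ₂) := by
    rw [sum_insSeq_of_lt a₁ i _ x hi, show a₂ + a₁ - 1 = a₁ + a₂ - 1 by omega]
    abel
  rw [← hdeg]
  refine h₂.2 _ _ fun l => ?_
  rcases lt_trichotomy l i with hl | rfl | hl
  · rw [insSeq_lt' _ _ _ _ hl, insSeq_lt' _ _ _ _ hl]
    exact hX l
  · rw [insSeq_eq', insSeq_eq']
    exact h₁.2 (shiftSeq x l) (shiftSeq X l) (fun m => hX (m + l))
  · rw [insSeq_gt' _ _ _ _ hl, insSeq_gt' _ _ _ _ hl]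
    exact hX _

end MemAux
section Final
open Finset

lemma brD_apply {G V : Type} [AddCommGroup G] [AddCommGroup V] (pr : G → G → ℤ)
    (a₁ : ℕ) (κ₁ : G) (a₂ : ℕ) (κ₂ : G) (K₁ K₂ : (ℕ → G) → (ℕ → V) → V)
    (x : ℕ → G) (X : ℕ → V) :
    brD pr a₁ κ₁ a₂ κ₂ K₁ K₂ x X
      = jop pr a₁ κ₁ a₂ κ₂ K₁ K₂ x X
        - sgn (((a₁ : ℤ) - 1) * ((a₂ : ℤ) - 1) + pr κ₁ κ₂) •
            jop pr a₂ κ₂ a₁ κ₁ K₂ K₁ x X := rfl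

theorem stmt3' {𝕂 : Type} [Field 𝕂] [CharZero 𝕂] (n : ℕ)
    {V : Type} [AddCommGroup V] [Module 𝕂 V]
    (gr : (Fin n → ℤ) → Submodule 𝕂 V) (hgr : DirectSum.IsInternal gr)
    (a₁ a₂ a₃ : ℕ) (κ₁ κ₂ κ₃ : Fin n → ℤ)
    (K₁ K₂ K₃ : (ℕ → (Fin n → ℤ)) → (ℕ → V) → V)
    (h₁ : MDeg 𝕂 gr a₁ κ₁ K₁) (h₂ : MDeg 𝕂 gr a₂ κ₂ K₂) (h₃ : MDeg 𝕂 gr a₃ κ₃ K₃) :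
    (∀ x X, (∀ i, X i ∈ gr (x i)) →
        brD (pairZ n) a₁ κ₁ a₂ κ₂ K₁ K₂ x X
          ∈ gr ((∑ i ∈ Finset.range (a₁ + a₂ - 1), x i) + (κ₁ + κ₂))) ∧
    (∀ x X, (∀ i, X i ∈ gr (x i)) →
        brD (pairZ n) a₁ κ₁ a₂ κ₂ K₁ K₂ x X
          = - (sgn (((a₁ : ℤ) - 1) * ((a₂ : ℤ) - 1) + pairZ n κ₁ κ₂) •
              brD (pairZ n) a₂ κ₂ a₁ κ₁ K₂ K₁ x X)) ∧
    (∀ x X, (∀ i, X i ∈ gr (x i)) →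
        brD (pairZ n) a₁ κ₁ (a₂ + a₃ - 1) (κ₂ + κ₃) K₁
            (brD (pairZ n) a₂ κ₂ a₃ κ₃ K₂ K₃) x X
          = brD (pairZ n) (a₁ + a₂ - 1) (κ₁ + κ₂) a₃ κ₃
              (brD (pairZ n) a₁ κ₁ a₂ κ₂ K₁ K₂) K₃ x X
            + sgn (((a₁ : ℤ) - 1) * ((a₂ : ℤ) - 1) + pairZ n κ₁ κ₂) •
              brD (pairZ n) a₂ κ₂ (a₁ + a₃ - 1) (κ₁ + κ₃) K₂
                (brD (pairZ n) a₁ κ₁ a₃ κ₃ K₁ K₃) x X) := by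
  have hadd : ∀ g h k : Fin n → ℤ, pairZ n g (h + k) = pairZ n g h + pairZ n g k := by
    intro g h k
    simp [pairZ, mul_add, Finset.sum_add_distrib]
  have hsym : ∀ g h : Fin n → ℤ, pairZ n g h = pairZ n h g := by
    intro g h
    simp [pairZ, mul_comm]
  have haddl : ∀ g h k : Fin n → ℤ, pairZ n (g + h) k = pairZ n g k + pairZ n h k :=
    fun g h k => by rw [hsym, hadd, hsym k g, hsym k h]
  refine ⟨?_, ?_, ?_⟩
  · -- grading
    intro x X hX
    rw [brD_apply]
    refine sub_mem (jop_mem _ h₁ h₂ x X hX) (zsmul_mem ?_ _)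
    have hm := jop_mem (pairZ n) h₂ h₁ x X hX
    rw [show a₂ + a₁ - 1 = a₁ + a₂ - 1 by omega, add_comm κ₂ κ₁] at hm
    exact hm
  · -- graded anticommutativity
    intro x X _
    rw [brD_apply, brD_apply]
    have hσ : sgn (((a₂ : ℤ) - 1) * ((a₁ : ℤ) - 1) + pairZ n κ₂ κ₁)
        = sgn (((a₁ : ℤ) - 1) * ((a₂ : ℤ) - 1) + pairZ n κ₁ κ₂) := by
      rw [hsym κ₂ κ₁]; ring_nf
    rw [hσ, smul_sub, smul_smul, sgn_mul_self, one_smul, neg_sub]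
  · -- graded Jacobi identity
    intro x X _
    have hP1 := preLie (pairZ n) hadd hsym (κ₁ := κ₁) (κ₂ := κ₂) (κ₃ := κ₃) h₁.1 h₂.1 h₃.1 x X
    rw [Nat.add_comm a₂ a₁, add_comm κ₂ κ₁] at hP1
    have hP2 := preLie (pairZ n) hadd hsym (κ₁ := κ₁) (κ₂ := κ₃) (κ₃ := κ₂) h₁.1 h₃.1 h₂.1 x X
    rw [Nat.add_comm a₃ a₂, add_comm κ₃ κ₂, Nat.add_comm a₃ a₁, add_comm κ₃ κ₁] at hP2
    have hP3 := preLie (pairZ n) hadd hsym (κ₁ := κ₂) (κ₂ := κ₃) (κ₃ := κ₁) h₂.1 h₃.1 h₁.1 x X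
    rw [Nat.add_comm a₃ a₁, add_comm κ₃ κ₁, Nat.add_comm a₂ a₁, add_comm κ₂ κ₁,
      Nat.add_comm a₃ a₂, add_comm κ₃ κ₂] at hP3
    rw [brD_apply, brD_apply, brD_apply]
    have e1 : jop (pairZ n) a₁ κ₁ (a₂ + a₃ - 1) (κ₂ + κ₃) K₁
          (brD (pairZ n) a₂ κ₂ a₃ κ₃ K₂ K₃) x X
        = jop (pairZ n) a₁ κ₁ (a₂ + a₃ - 1) (κ₂ + κ₃) K₁
            (jop (pairZ n) a₂ κ₂ a₃ κ₃ K₂ K₃) x X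
          - sgn (((a₂ : ℤ) - 1) * ((a₃ : ℤ) - 1) + pairZ n κ₂ κ₃) •
            jop (pairZ n) a₁ κ₁ (a₂ + a₃ - 1) (κ₂ + κ₃) K₁
              (jop (pairZ n) a₃ κ₃ a₂ κ₂ K₃ K₂) x X :=
      jop_right_sub (pairZ n) _ _ _ _ K₁ _ _ _ x X
    have e2 : jop (pairZ n) (a₂ + a₃ - 1) (κ₂ + κ₃) a₁ κ₁
          (brD (pairZ n) a₂ κ₂ a₃ κ₃ K₂ K₃) K₁ x X
        = jop (pairZ n) (a₂ + a₃ - 1) (κ₂ + κ₃) a₁ κ₁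
            (jop (pairZ n) a₂ κ₂ a₃ κ₃ K₂ K₃) K₁ x X
          - sgn (((a₂ : ℤ) - 1) * ((a₃ : ℤ) - 1) + pairZ n κ₂ κ₃) •
            jop (pairZ n) (a₂ + a₃ - 1) (κ₂ + κ₃) a₁ κ₁
              (jop (pairZ n) a₃ κ₃ a₂ κ₂ K₃ K₂) K₁ x X :=
      jop_left_sub (pairZ n) _ _ _ _ _ _ K₁ h₁.1 _ x X
    have e3 : jop (pairZ n) (a₁ + a₂ - 1) (κ₁ + κ₂) a₃ κ₃
          (brD (pairZ n) a₁ κ₁ a₂ κ₂ K₁ K₂) K₃ x X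
        = jop (pairZ n) (a₁ + a₂ - 1) (κ₁ + κ₂) a₃ κ₃
            (jop (pairZ n) a₁ κ₁ a₂ κ₂ K₁ K₂) K₃ x X
          - sgn (((a₁ : ℤ) - 1) * ((a₂ : ℤ) - 1) + pairZ n κ₁ κ₂) •
            jop (pairZ n) (a₁ + a₂ - 1) (κ₁ + κ₂) a₃ κ₃
              (jop (pairZ n) a₂ κ₂ a₁ κ₁ K₂ K₁) K₃ x X :=
      jop_left_sub (pairZ n) _ _ _ _ _ _ K₃ h₃.1 _ x X
    have e4 : jop (pairZ n) a₃ κ₃ (a₁ + a₂ - 1) (κ₁ + κ₂) K₃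
          (brD (pairZ n) a₁ κ₁ a₂ κ₂ K₁ K₂) x X
        = jop (pairZ n) a₃ κ₃ (a₁ + a₂ - 1) (κ₁ + κ₂) K₃
            (jop (pairZ n) a₁ κ₁ a₂ κ₂ K₁ K₂) x X
          - sgn (((a₁ : ℤ) - 1) * ((a₂ : ℤ) - 1) + pairZ n κ₁ κ₂) •
            jop (pairZ n) a₃ κ₃ (a₁ + a₂ - 1) (κ₁ + κ₂) K₃
              (jop (pairZ n) a₂ κ₂ a₁ κ₁ K₂ K₁) x X :=
      jop_right_sub (pairZ n) _ _ _ _ K₃ _ _ _ x X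
    have e5 : jop (pairZ n) a₂ κ₂ (a₁ + a₃ - 1) (κ₁ + κ₃) K₂
          (brD (pairZ n) a₁ κ₁ a₃ κ₃ K₁ K₃) x X
        = jop (pairZ n) a₂ κ₂ (a₁ + a₃ - 1) (κ₁ + κ₃) K₂
            (jop (pairZ n) a₁ κ₁ a₃ κ₃ K₁ K₃) x X
          - sgn (((a₁ : ℤ) - 1) * ((a₃ : ℤ) - 1) + pairZ n κ₁ κ₃) •
            jop (pairZ n) a₂ κ₂ (a₁ + a₃ - 1) (κ₁ + κ₃) K₂
              (jop (pairZ n) a₃ κ₃ a₁ κ₁ K₃ K₁) x X :=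
      jop_right_sub (pairZ n) _ _ _ _ K₂ _ _ _ x X
    have e6 : jop (pairZ n) (a₁ + a₃ - 1) (κ₁ + κ₃) a₂ κ₂
          (brD (pairZ n) a₁ κ₁ a₃ κ₃ K₁ K₃) K₂ x X
        = jop (pairZ n) (a₁ + a₃ - 1) (κ₁ + κ₃) a₂ κ₂
            (jop (pairZ n) a₁ κ₁ a₃ κ₃ K₁ K₃) K₂ x X
          - sgn (((a₁ : ℤ) - 1) * ((a₃ : ℤ) - 1) + pairZ n κ₁ κ₃) •
            jop (pairZ n) (a₁ + a₃ - 1) (κ₁ + κ₃) a₂ κ₂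
              (jop (pairZ n) a₃ κ₃ a₁ κ₁ K₃ K₁) K₂ x X :=
      jop_left_sub (pairZ n) _ _ _ _ _ _ K₂ h₂.1 _ x X
    rw [e1, e2, e3, e4, e5, e6]
    -- composite signs
    have hc1 : sgn (((a₁ : ℤ) - 1) * (((a₂ + a₃ - 1 : ℕ) : ℤ) - 1) + pairZ n κ₁ (κ₂ + κ₃)) •
          (jop (pairZ n) (a₂ + a₃ - 1) (κ₂ + κ₃) a₁ κ₁
              (jop (pairZ n) a₂ κ₂ a₃ κ₃ K₂ K₃) K₁ x X
            - sgn (((a₂ : ℤ) - 1) * ((a₃ : ℤ) - 1) + pairZ n κ₂ κ₃) •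
              jop (pairZ n) (a₂ + a₃ - 1) (κ₂ + κ₃) a₁ κ₁
                (jop (pairZ n) a₃ κ₃ a₂ κ₂ K₃ K₂) K₁ x X)
        = (sgn (((a₁ : ℤ) - 1) * ((a₂ : ℤ) - 1) + pairZ n κ₁ κ₂) *
            sgn (((a₁ : ℤ) - 1) * ((a₃ : ℤ) - 1) + pairZ n κ₁ κ₃)) •
          (jop (pairZ n) (a₂ + a₃ - 1) (κ₂ + κ₃) a₁ κ₁
              (jop (pairZ n) a₂ κ₂ a₃ κ₃ K₂ K₃) K₁ x X
            - sgn (((a₂ : ℤ) - 1) * ((a₃ : ℤ) - 1) + pairZ n κ₂ κ₃) •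
              jop (pairZ n) (a₂ + a₃ - 1) (κ₂ + κ₃) a₁ κ₁
                (jop (pairZ n) a₃ κ₃ a₂ κ₂ K₃ K₂) K₁ x X) := by
      by_cases hz : a₂ + a₃ = 0
      · have hC : jop (pairZ n) (a₂ + a₃ - 1) (κ₂ + κ₃) a₁ κ₁
            (jop (pairZ n) a₂ κ₂ a₃ κ₃ K₂ K₃) K₁ x X = 0 :=
          jop_left_zero (pairZ n) _ _ _ _ _ K₁ h₁.1
            (fun y Y => by rw [jop, show a₃ = 0 from by omega]; simp) x X
        have hD : jop (pairZ n) (a₂ + a₃ - 1) (κ₂ + κ₃) a₁ κ₁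
            (jop (pairZ n) a₃ κ₃ a₂ κ₂ K₃ K₂) K₁ x X = 0 :=
          jop_left_zero (pairZ n) _ _ _ _ _ K₁ h₁.1
            (fun y Y => by rw [jop, show a₂ = 0 from by omega]; simp) x X
        rw [hC, hD]; simp
      · congr 1
        rw [show (((a₂ + a₃ - 1 : ℕ) : ℤ)) = (a₂ : ℤ) + (a₃ : ℤ) - 1 from by omega,
          ← sgn_add]
        congr 1
        simp only [hadd]
        ring
    have hc2 : sgn ((((a₁ + a₂ - 1 : ℕ) : ℤ) - 1) * ((a₃ : ℤ) - 1) + pairZ n (κ₁ + κ₂) κ₃) •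
          (jop (pairZ n) a₃ κ₃ (a₁ + a₂ - 1) (κ₁ + κ₂) K₃
              (jop (pairZ n) a₁ κ₁ a₂ κ₂ K₁ K₂) x X
            - sgn (((a₁ : ℤ) - 1) * ((a₂ : ℤ) - 1) + pairZ n κ₁ κ₂) •
              jop (pairZ n) a₃ κ₃ (a₁ + a₂ - 1) (κ₁ + κ₂) K₃
                (jop (pairZ n) a₂ κ₂ a₁ κ₁ K₂ K₁) x X)
        = (sgn (((a₁ : ℤ) - 1) * ((a₃ : ℤ) - 1) + pairZ n κ₁ κ₃) *
            sgn (((a₂ : ℤ) - 1) * ((a₃ : ℤ) - 1) + pairZ n κ₂ κ₃)) •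
          (jop (pairZ n) a₃ κ₃ (a₁ + a₂ - 1) (κ₁ + κ₂) K₃
              (jop (pairZ n) a₁ κ₁ a₂ κ₂ K₁ K₂) x X
            - sgn (((a₁ : ℤ) - 1) * ((a₂ : ℤ) - 1) + pairZ n κ₁ κ₂) •
              jop (pairZ n) a₃ κ₃ (a₁ + a₂ - 1) (κ₁ + κ₂) K₃
                (jop (pairZ n) a₂ κ₂ a₁ κ₁ K₂ K₁) x X) := by
      by_cases hz : a₁ + a₂ = 0
      · have hC : jop (pairZ n) a₃ κ₃ (a₁ + a₂ - 1) (κ₁ + κ₂) K₃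
            (jop (pairZ n) a₁ κ₁ a₂ κ₂ K₁ K₂) x X = 0 :=
          jop_right_zero (pairZ n) _ _ _ _ K₃ _
            (fun y Y => by rw [jop, show a₂ = 0 from by omega]; simp) x X
        have hD : jop (pairZ n) a₃ κ₃ (a₁ + a₂ - 1) (κ₁ + κ₂) K₃
            (jop (pairZ n) a₂ κ₂ a₁ κ₁ K₂ K₁) x X = 0 :=
          jop_right_zero (pairZ n) _ _ _ _ K₃ _
            (fun y Y => by rw [jop, show a₁ = 0 from by omega]; simp) x X
        rw [hC, hD]; simp
      · congr 1
        rw [show (((a₁ + a₂ - 1 : ℕ) : ℤ)) = (a₁ : ℤ) + (a₂ : ℤ) - 1 from by omega,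
          ← sgn_add]
        congr 1
        simp only [haddl]
        ring
    have hc3 : sgn (((a₂ : ℤ) - 1) * (((a₁ + a₃ - 1 : ℕ) : ℤ) - 1) + pairZ n κ₂ (κ₁ + κ₃)) •
          (jop (pairZ n) (a₁ + a₃ - 1) (κ₁ + κ₃) a₂ κ₂
              (jop (pairZ n) a₁ κ₁ a₃ κ₃ K₁ K₃) K₂ x X
            - sgn (((a₁ : ℤ) - 1) * ((a₃ : ℤ) - 1) + pairZ n κ₁ κ₃) •
              jop (pairZ n) (a₁ + a₃ - 1) (κ₁ + κ₃) a₂ κ₂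
                (jop (pairZ n) a₃ κ₃ a₁ κ₁ K₃ K₁) K₂ x X)
        = (sgn (((a₁ : ℤ) - 1) * ((a₂ : ℤ) - 1) + pairZ n κ₁ κ₂) *
            sgn (((a₂ : ℤ) - 1) * ((a₃ : ℤ) - 1) + pairZ n κ₂ κ₃)) •
          (jop (pairZ n) (a₁ + a₃ - 1) (κ₁ + κ₃) a₂ κ₂
              (jop (pairZ n) a₁ κ₁ a₃ κ₃ K₁ K₃) K₂ x X
            - sgn (((a₁ : ℤ) - 1) * ((a₃ : ℤ) - 1) + pairZ n κ₁ κ₃) •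
              jop (pairZ n) (a₁ + a₃ - 1) (κ₁ + κ₃) a₂ κ₂
                (jop (pairZ n) a₃ κ₃ a₁ κ₁ K₃ K₁) K₂ x X) := by
      by_cases hz : a₁ + a₃ = 0
      · have hC : jop (pairZ n) (a₁ + a₃ - 1) (κ₁ + κ₃) a₂ κ₂
            (jop (pairZ n) a₁ κ₁ a₃ κ₃ K₁ K₃) K₂ x X = 0 :=
          jop_left_zero (pairZ n) _ _ _ _ _ K₂ h₂.1
            (fun y Y => by rw [jop, show a₃ = 0 from by omega]; simp) x X
        have hD : jop (pairZ n) (a₁ + a₃ - 1) (κ₁ + κ₃) a₂ κ₂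
            (jop (pairZ n) a₃ κ₃ a₁ κ₁ K₃ K₁) K₂ x X = 0 :=
          jop_left_zero (pairZ n) _ _ _ _ _ K₂ h₂.1
            (fun y Y => by rw [jop, show a₁ = 0 from by omega]; simp) x X
        rw [hC, hD]; simp
      · congr 1
        rw [show (((a₁ + a₃ - 1 : ℕ) : ℤ)) = (a₁ : ℤ) + (a₃ : ℤ) - 1 from by omega,
          ← sgn_add]
        congr 1
        simp only [hadd]
        rw [hsym κ₂ κ₁]
        ring
    rw [hc1, hc2, hc3]
    rcases sgn_eq_one_or (((a₁ : ℤ) - 1) * ((a₂ : ℤ) - 1) + pairZ n κ₁ κ₂) with h12 | h12 <;>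
      rcases sgn_eq_one_or (((a₁ : ℤ) - 1) * ((a₃ : ℤ) - 1) + pairZ n κ₁ κ₃) with h13 | h13 <;>
      rcases sgn_eq_one_or (((a₂ : ℤ) - 1) * ((a₃ : ℤ) - 1) + pairZ n κ₂ κ₃) with h23 | h23
    all_goals
      simp only [h12, h13, h23, one_mul, mul_one, neg_mul, mul_neg, neg_neg, one_smul, neg_smul] at hP1 hP2 hP3 ⊢
      rw [sub_eq_iff_eq_add] at hP1 hP2 hP3
      rw [hP1, hP2, hP3]
      abel
end Final

/-- For an `n`-graded vector space `V` over a field of characteristic `0`,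
`(M(V), [·,·]^Δ)` is an `(n+1)`-graded Lie algebra: the bracket of homogeneous elements of
bidegrees `(k₁,κ₁)`, `(k₂,κ₂)` is homogeneous of bidegree `(k₁+k₂, κ₁+κ₂)`, it is
`(n+1)`-graded anticommutative, and it satisfies the `(n+1)`-graded Jacobi identity.
Elements of `M^{(k,κ)}(V)` are coded by functions of arity `a = k+1` (see `MDeg`), and the
identities are stated on homogeneous arguments (`X i ∈ V^{x i}`), which determine the
multilinear maps. -/
theorem stmt3 {𝕂 : Type} [Field 𝕂] [CharZero 𝕂] (n : ℕ)
    {V : Type} [AddCommGroup V] [Module 𝕂 V]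
    (gr : (Fin n → ℤ) → Submodule 𝕂 V) (hgr : DirectSum.IsInternal gr)
    (a₁ a₂ a₃ : ℕ) (κ₁ κ₂ κ₃ : Fin n → ℤ)
    (K₁ K₂ K₃ : (ℕ → (Fin n → ℤ)) → (ℕ → V) → V)
    (h₁ : MDeg 𝕂 gr a₁ κ₁ K₁) (h₂ : MDeg 𝕂 gr a₂ κ₂ K₂) (h₃ : MDeg 𝕂 gr a₃ κ₃ K₃) :
    (∀ x X, (∀ i, X i ∈ gr (x i)) →
        brD (pairZ n) a₁ κ₁ a₂ κ₂ K₁ K₂ x X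
          ∈ gr ((∑ i ∈ Finset.range (a₁ + a₂ - 1), x i) + (κ₁ + κ₂))) ∧
    (∀ x X, (∀ i, X i ∈ gr (x i)) →
        brD (pairZ n) a₁ κ₁ a₂ κ₂ K₁ K₂ x X
          = - (sgn (((a₁ : ℤ) - 1) * ((a₂ : ℤ) - 1) + pairZ n κ₁ κ₂) •
              brD (pairZ n) a₂ κ₂ a₁ κ₁ K₂ K₁ x X)) ∧
    (∀ x X, (∀ i, X i ∈ gr (x i)) →
        brD (pairZ n) a₁ κ₁ (a₂ + a₃ - 1) (κ₂ + κ₃) K₁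
            (brD (pairZ n) a₂ κ₂ a₃ κ₃ K₂ K₃) x X
          = brD (pairZ n) (a₁ + a₂ - 1) (κ₁ + κ₂) a₃ κ₃
              (brD (pairZ n) a₁ κ₁ a₂ κ₂ K₁ K₂) K₃ x X
            + sgn (((a₁ : ℤ) - 1) * ((a₂ : ℤ) - 1) + pairZ n κ₁ κ₂) •
              brD (pairZ n) a₂ κ₂ (a₁ + a₃ - 1) (κ₁ + κ₃) K₂
                (brD (pairZ n) a₁ κ₁ a₃ κ₃ K₁ K₃) x X) := by
  exact stmt3' n gr hgr a₁ a₂ a₃ κ₁ κ₂ κ₃ K₁ K₂ K₃ h₁ h₂ h₃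

end NR
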